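/- For all integers m ≥ 0 and 0 ≤ ℓ ≤ m−1, 2(m+1)(m+1−ℓ)·d_ℓ(m+1) = (4m−2ℓ+3)(m+ℓ+1)·d_ℓ(m) − 2ℓ(ℓ+1)·d_{ℓ+1}(m). -/

import Mathlib

/-!
Creative telescoping. Let `t(m, k) = 2^k C(2m-2k, m-k) C(m+k, k) C(k, ℓ)`, so that
`4^m d_ℓ(m) = ∑_{k ≤ m} t(m, k)` (the terms with `k < ℓ` vanish). For `k ≤ m`,
`(m+1)(m+1-ℓ) t(m+1, k) - (2(4m-2ℓ+3)(m+ℓ+1) - 4ℓ(k-ℓ)) t(m, k) = G(k+1) - G(k)`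
with the Zeilberger certificate `G(k) = -2(m+1)(k-ℓ) 2^k C(2m+2-2k, m+1-k) C(m+k, k) C(k, ℓ)`,
and `(ℓ+1) C(k, ℓ+1) = (k-ℓ) C(k, ℓ)` turns the part linear in `k` into `d_{ℓ+1}(m)`.
Summing over `k ≤ m`, the certificate telescopes to `G(m+1)`, which cancels the top term
`k = m+1` of `∑_k t(m+1, k)`.
-/

/-- The Boros-Moll coefficient `d_ℓ(m)` as a rational number. -/
def bmQ (l m : ℕ) : ℚ :=
  (1 / (2:ℚ) ^ (2 * m)) *
    ∑ k ∈ Finset.Icc l m,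
      (2:ℚ) ^ k * (Nat.choose (2 * m - 2 * k) (m - k)) *
        (Nat.choose (m + k) k) * (Nat.choose k l)

open Finset

section CastChoose

variable {R : Type*} [CommRing R]

theorem Nat.cast_add_one_mul_choose_succ (n k : ℕ) :
    ((k : R) + 1) * (n.choose (k + 1) : R) = ((n : R) - k) * (n.choose k : R) := by
  rcases le_or_gt k n with hkn | hnk
  · have h := congrArg (Nat.cast : ℕ → R) (Nat.choose_succ_right_eq n k)
    push_cast [Nat.cast_sub hkn] at h
    linear_combination h
  · simp [Nat.choose_eq_zero_of_lt hnk, Nat.choose_eq_zero_of_lt (Nat.lt_succ_of_lt hnk)]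

theorem Nat.cast_add_one_sub_mul_choose_succ (n k : ℕ) :
    ((n : R) + 1 - k) * ((n + 1).choose k : R) = ((n : R) + 1) * (n.choose k : R) := by
  rcases le_or_gt k (n + 1) with hkn | hnk
  · have h := congrArg (Nat.cast : ℕ → R) (Nat.choose_mul_succ_eq n k)
    push_cast [Nat.cast_sub hkn] at h
    linear_combination -h
  · simp [Nat.choose_eq_zero_of_lt hnk, Nat.choose_eq_zero_of_lt (Nat.lt_of_succ_lt hnk)]

theorem Nat.cast_add_one_mul_choose_two_mul_add_two (n : ℕ) :
    ((n : R) + 1) * ((2 * n + 2).choose (n + 1) : R)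
      = 2 * (2 * n + 1) * ((2 * n).choose n : R) := by
  have h := congrArg (Nat.cast : ℕ → R) (Nat.succ_mul_centralBinom_succ n)
  simp only [Nat.centralBinom_eq_two_mul_choose, mul_add_one] at h
  push_cast at h
  linear_combination h

end CastChoose

theorem Nat.choose_two_mul_add_two_succ (n : ℕ) :
    (2 * n + 2).choose (n + 1) = 2 * (2 * n + 1).choose (n + 1) := by
  rw [Nat.choose_succ_succ', Nat.choose_symm_half]
  ring

namespace BorosMoll

def term (l m k : ℕ) : ℚ :=
  2 ^ k * ((2 * m - 2 * k).choose (m - k) : ℚ) * ((m + k).choose k : ℚ) * (k.choose l : ℚ)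

def certificate (l m k : ℕ) : ℚ :=
  -2 * ((m : ℚ) + 1) * ((k : ℚ) - l) * 2 ^ k * ((2 * (m + 1) - 2 * k).choose (m + 1 - k) : ℚ)
    * ((m + k).choose k : ℚ) * (k.choose l : ℚ)

theorem bmQ_eq_sum_range_div (l m : ℕ) :
    bmQ l m = (∑ k ∈ range (m + 1), term l m k) / 4 ^ m := by
  have hvanish : ∀ k ∈ range (m + 1), k ∉ Icc l m → term l m k = 0 := by
    intro k hk hkIcc
    have hkl : k < l := by simp only [mem_range, mem_Icc] at hk hkIcc; omega
    simp [term, Nat.choose_eq_zero_of_lt hkl]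
  rw [bmQ, pow_mul, ← sum_subset (fun k hk => by simp only [mem_Icc] at hk; simp; omega) hvanish]
  norm_num [term, div_eq_inv_mul]

theorem mul_term_succ_eq_mul_term {l m k : ℕ} (hkm : k ≤ m) :
    ((m : ℚ) + 1) * ((m : ℚ) + 1 - k) * term l (m + 1) k
      = 2 * (2 * ((m : ℚ) - k) + 1) * ((m : ℚ) + k + 1) * term l m k := by
  obtain ⟨j, rfl⟩ : ∃ j, m = k + j := ⟨m - k, by omega⟩
  have hcentral := Nat.cast_add_one_mul_choose_two_mul_add_two (R := ℚ) j
  have hupper := Nat.cast_add_one_sub_mul_choose_succ (R := ℚ) (k + j + k) k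
  simp only [term, show 2 * (k + j + 1) - 2 * k = 2 * j + 2 by omega,
    show k + j + 1 - k = j + 1 by omega, show 2 * (k + j) - 2 * k = 2 * j by omega,
    show k + j - k = j by omega, show k + j + 1 + k = k + j + k + 1 by omega]
  push_cast at hupper ⊢
  linear_combination
    (2 ^ k * (k.choose l : ℚ) * ((k : ℚ) + j + 1) * ((k + j + k + 1).choose k : ℚ)) * hcentral
    + (2 ^ k * (k.choose l : ℚ) * 2 * (2 * (j : ℚ) + 1) * ((2 * j).choose j : ℚ)) * hupper

theorem certificate_succ (l m k : ℕ) :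
    certificate l m (k + 1) = -4 * ((m : ℚ) + 1) * ((m : ℚ) + k + 1) * term l m k := by
  have hlower := Nat.cast_add_one_sub_mul_choose_succ (R := ℚ) k l
  have hupper := congrArg (Nat.cast : ℕ → ℚ) (Nat.add_one_mul_choose_eq (m + k) k)
  simp only [certificate, term, show 2 * (m + 1) - 2 * (k + 1) = 2 * m - 2 * k by omega,
    show m + 1 - (k + 1) = m - k by omega, show m + (k + 1) = m + k + 1 by omega]
  push_cast at hupper ⊢
  linear_combination
    (-4 * ((m : ℚ) + 1) * 2 ^ k * ((2 * m - 2 * k).choose (m - k) : ℚ)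
      * ((m + k + 1).choose (k + 1) : ℚ)) * hlower
    + (4 * ((m : ℚ) + 1) * 2 ^ k * ((2 * m - 2 * k).choose (m - k) : ℚ) * (k.choose l : ℚ))
      * hupper

theorem mul_certificate_eq_mul_term {l m k : ℕ} (hkm : k ≤ m) :
    ((m : ℚ) + 1 - k) * certificate l m k
      = -4 * ((m : ℚ) + 1) * ((k : ℚ) - l) * (2 * ((m : ℚ) - k) + 1) * term l m k := by
  obtain ⟨j, rfl⟩ : ∃ j, m = k + j := ⟨m - k, by omega⟩
  have hcentral := Nat.cast_add_one_mul_choose_two_mul_add_two (R := ℚ) j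
  simp only [certificate, term, show 2 * (k + j + 1) - 2 * k = 2 * j + 2 by omega,
    show k + j + 1 - k = j + 1 by omega, show 2 * (k + j) - 2 * k = 2 * j by omega,
    show k + j - k = j by omega]
  push_cast
  linear_combination
    (-2 * ((k : ℚ) + j + 1) * ((k : ℚ) - l) * 2 ^ k * ((k + j + k).choose k : ℚ)
      * (k.choose l : ℚ)) * hcentral

theorem certificate_top (l m : ℕ) :
    certificate l m (m + 1)
      = -(((m : ℚ) + 1) * ((m : ℚ) + 1 - l)) * term l (m + 1) (m + 1) := by
  simp only [certificate, term, Nat.sub_self, Nat.choose_self,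
    show m + (m + 1) = 2 * m + 1 by omega, show m + 1 + (m + 1) = 2 * m + 2 by omega,
    Nat.choose_two_mul_add_two_succ]
  push_cast
  ring

theorem certificate_zero (l m : ℕ) : certificate l m 0 = 0 := by
  rcases l with _ | l <;> simp [certificate]

theorem mul_term_succ_eq_add_certificate_sub {l m k : ℕ} (hkm : k ≤ m) :
    ((m : ℚ) + 1) * ((m : ℚ) + 1 - l) * term l (m + 1) k
      = (2 * (4 * (m : ℚ) - 2 * l + 3) * ((m : ℚ) + l + 1) - 4 * (l : ℚ) * ((k : ℚ) - l))
          * term l m k + (certificate l m (k + 1) - certificate l m k) := by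
  have hne : (m : ℚ) + 1 - k ≠ 0 := by
    have : (k : ℚ) ≤ m := by exact_mod_cast hkm
    linarith
  apply mul_left_cancel₀ hne
  linear_combination ((m : ℚ) + 1 - l) * mul_term_succ_eq_mul_term (l := l) hkm
    - ((m : ℚ) + 1 - k) * certificate_succ l m k + mul_certificate_eq_mul_term (l := l) hkm

theorem add_one_mul_sum_term_succ_lower (l m : ℕ) :
    ((l : ℚ) + 1) * ∑ k ∈ range (m + 1), term (l + 1) m k
      = ∑ k ∈ range (m + 1), ((k : ℚ) - l) * term l m k := by
  rw [mul_sum]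
  refine sum_congr rfl fun k _ => ?_
  simp only [term]
  linear_combination (2 ^ k * ((2 * m - 2 * k).choose (m - k) : ℚ) * ((m + k).choose k : ℚ))
    * Nat.cast_add_one_mul_choose_succ (R := ℚ) k l

theorem sum_term_recurrence (l m : ℕ) :
    ((m : ℚ) + 1) * ((m : ℚ) + 1 - l) * ∑ k ∈ range (m + 2), term l (m + 1) k
      = 2 * (4 * (m : ℚ) - 2 * l + 3) * ((m : ℚ) + l + 1) * ∑ k ∈ range (m + 1), term l m k
        - 4 * (l : ℚ) * ((l : ℚ) + 1) * ∑ k ∈ range (m + 1), term (l + 1) m k := by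
  have htelescope :
      ((m : ℚ) + 1) * ((m : ℚ) + 1 - l) * ∑ k ∈ range (m + 1), term l (m + 1) k
      = ∑ k ∈ range (m + 1),
          (2 * (4 * (m : ℚ) - 2 * l + 3) * ((m : ℚ) + l + 1) - 4 * (l : ℚ) * ((k : ℚ) - l))
            * term l m k
        + (certificate l m (m + 1) - certificate l m 0) := by
    rw [mul_sum, ← sum_range_sub, ← sum_add_distrib]
    exact sum_congr rfl fun k hk =>
      mul_term_succ_eq_add_certificate_sub (mem_range_succ_iff.1 hk)
  have hsplit : ∑ k ∈ range (m + 1),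
        (2 * (4 * (m : ℚ) - 2 * l + 3) * ((m : ℚ) + l + 1) - 4 * (l : ℚ) * ((k : ℚ) - l))
          * term l m k
      = 2 * (4 * (m : ℚ) - 2 * l + 3) * ((m : ℚ) + l + 1) * ∑ k ∈ range (m + 1), term l m k
        - 4 * (l : ℚ) * ∑ k ∈ range (m + 1), ((k : ℚ) - l) * term l m k := by
    rw [mul_sum, mul_sum, ← sum_sub_distrib]
    exact sum_congr rfl fun k _ => by ring
  rw [sum_range_succ, mul_add, htelescope, hsplit, certificate_top, certificate_zero,
    ← add_one_mul_sum_term_succ_lower]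
  ring

end BorosMoll

theorem stmt_2_general (m l : ℕ) :
    2 * ((m:ℚ) + 1) * ((m:ℚ) + 1 - l) * bmQ l (m+1) =
      (4*(m:ℚ) - 2*l + 3) * ((m:ℚ) + l + 1) * bmQ l m
        - 2 * (l:ℚ) * ((l:ℚ) + 1) * bmQ (l+1) m := by
  simp only [BorosMoll.bmQ_eq_sum_range_div, pow_succ]
  field_simp
  linear_combination 2 * BorosMoll.sum_term_recurrence l m

theorem stmt_2 (m l : ℕ) (hlm : l + 1 ≤ m) :
    2 * ((m:ℚ) + 1) * ((m:ℚ) + 1 - l) * bmQ l (m+1) =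
      (4*(m:ℚ) - 2*l + 3) * ((m:ℚ) + l + 1) * bmQ l m
        - 2 * (l:ℚ) * ((l:ℚ) + 1) * bmQ (l+1) m :=
  stmt_2_general m l
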